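/- arXiv:1610.10008 — 3 statements merged into one kernel-verified Lean document; each statement's English description precedes it below -/
import Mathlib

section
/- For the case d = 0 with equal deferral counters: if CW' = CW + 1, and B(CW) denotes the expression B with window CW, then B(CW+1) > B(CW) for all p in (0,1); i.e., increasing the contention window by one strictly increases the mean number of backoff slots between transmission attempts. -/
/-- Tail probability of Bin(k,p) beyond threshold `d`. -/
noncomputable def x (d k : ℕ) (p : ℝ) : ℝ :=
  ∑ j ∈ Finset.Icc (d+1) k, (k.choose j : ℝ) * p^j * (1-p)^(k-j)

/-- Mean number of backoff slots between transmission attempts with window `CW`. -/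
noncomputable def B (d CW : ℕ) (p : ℝ) : ℝ :=
  ((CW:ℝ)*((CW:ℝ)-1)/2 - ∑ k ∈ Finset.Icc (d+1) (CW-1), ((CW:ℝ)-1-(k:ℝ)) * x d k p) /
  ((CW:ℝ) - ∑ k ∈ Finset.Icc (d+1) (CW-1), x d k p)

/-!
For `d = 0` the tail probabilities are `x k = 1 - q ^ k` with `q = 1 - p`, so with
`S m = ∑_{k ≤ m} q ^ k` and `N m = ∑_{k ≤ m} (m - k) q ^ k` one gets `B (m + 1) = N m / S m`.
Enlarging the window adds `S m` to the numerator and `q ^ (m + 1)` to the denominator, so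
`B (m + 1) < B (m + 2)` amounts to `N m * q ^ (m + 1) < S m ^ 2`. This holds because
`N m ≤ m * S m` while `m * q ^ (m + 1) < (m + 1) * q ^ (m + 1) ≤ S m`, the powers of `q ≤ 1`
being decreasing.
-/

open Finset

theorem sum_range_succ_eq_add_sum_Icc {M : Type*} [AddCommMonoid M] (f : ℕ → M) (m : ℕ) :
    ∑ k ∈ range (m + 1), f k = f 0 + ∑ k ∈ Icc 1 m, f k := by
  rw [sum_range_eq_add_Ico f (Nat.add_one_pos m), Ico_add_one_right_eq_Icc]

theorem x_zero (k : ℕ) (p : ℝ) : x 0 k p = 1 - (1 - p) ^ k := by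
  have h := add_pow p (1 - p) k
  rw [add_sub_cancel, one_pow, sum_range_succ_eq_add_sum_Icc] at h
  simp only [pow_zero, Nat.sub_zero, Nat.choose_zero_right, Nat.cast_one, one_mul, mul_one] at h
  have hsum : x 0 k p = ∑ j ∈ Icc 1 k, p ^ j * (1 - p) ^ (k - j) * (k.choose j : ℝ) :=
    sum_congr rfl fun j _ => by ring
  linarith

theorem sum_Icc_one_cast (m : ℕ) : ∑ k ∈ Icc 1 m, (k : ℝ) = m * (m + 1) / 2 := by
  induction m with
  | zero => simp
  | succ m ih =>
    rw [sum_Icc_succ_top (by omega), ih]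
    push_cast
    ring

theorem B_zero_succ (m : ℕ) (p : ℝ) :
    B 0 (m + 1) p =
      (∑ k ∈ range (m + 1), ((m : ℝ) - k) * (1 - p) ^ k) / ∑ k ∈ range (m + 1), (1 - p) ^ k := by
  simp only [B, zero_add, Nat.add_sub_cancel, x_zero, Nat.cast_add_one, add_sub_cancel_right,
    mul_one_sub, sum_range_succ_eq_add_sum_Icc, sum_sub_distrib, sum_const, Nat.card_Icc,
    nsmul_eq_mul, sum_Icc_one_cast]
  congr 1 <;> ring

theorem sum_range_succ_cast_sub_mul_pow {R : Type*} [CommRing R] (m : ℕ) (q : R) :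
    ∑ k ∈ range (m + 1 + 1), (((m + 1 : ℕ) : R) - k) * q ^ k =
      ∑ k ∈ range (m + 1), ((m : R) - k) * q ^ k + ∑ k ∈ range (m + 1), q ^ k := by
  rw [sum_range_succ, sub_self, zero_mul, add_zero, ← sum_add_distrib]
  exact sum_congr rfl fun k _ => by push_cast; ring

section OrderedRing

variable {R : Type*} [CommRing R] [LinearOrder R] [IsStrictOrderedRing R] {q : R}

theorem sum_range_cast_sub_mul_pow_le (hq : 0 ≤ q) (m : ℕ) :
    ∑ k ∈ range (m + 1), ((m : R) - k) * q ^ k ≤ m * ∑ k ∈ range (m + 1), q ^ k := by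
  rw [mul_sum]
  gcongr with k
  exact sub_le_self _ k.cast_nonneg

theorem natCast_mul_pow_le_geom_sum (hq0 : 0 ≤ q) (hq1 : q ≤ 1) (n : ℕ) :
    n * q ^ n ≤ ∑ k ∈ range n, q ^ k := by
  simpa using card_nsmul_le_sum (range n) (q ^ ·) (q ^ n)
    fun k hk => pow_le_pow_of_le_one hq0 hq1 (mem_range.1 hk).le

theorem sum_range_cast_sub_mul_pow_mul_pow_lt_sq (hq0 : 0 < q) (hq1 : q ≤ 1) (m : ℕ) :
    (∑ k ∈ range (m + 1), ((m : R) - k) * q ^ k) * q ^ (m + 1) <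
      (∑ k ∈ range (m + 1), q ^ k) ^ 2 := by
  set S := ∑ k ∈ range (m + 1), q ^ k
  have hS : 0 < S := geom_sum_pos hq0.le (Nat.add_one_ne_zero m)
  have hmS : m * q ^ (m + 1) < S := by
    have := natCast_mul_pow_le_geom_sum hq0.le hq1 (m + 1)
    push_cast at this
    linarith [pow_pos hq0 (m + 1)]
  calc (∑ k ∈ range (m + 1), ((m : R) - k) * q ^ k) * q ^ (m + 1)
      ≤ m * S * q ^ (m + 1) := by
        gcongr
        exact sum_range_cast_sub_mul_pow_le hq0.le m
    _ = S * (m * q ^ (m + 1)) := by ring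
    _ < S ^ 2 := by rw [sq]; gcongr

end OrderedRing

theorem div_lt_add_div_add {K : Type*} [Field K] [LinearOrder K] [IsStrictOrderedRing K]
    {a b c : K} (hb : 0 < b) (hc : 0 ≤ c) (h : a * c < b ^ 2) : a / b < (a + b) / (b + c) := by
  rw [div_lt_div_iff₀ hb (by positivity)]
  linear_combination h

/-- For `d = 0` (equal deferral counters), increasing the contention window by one
strictly increases the mean number of backoff slots between attempts. -/
theorem B_strict_mono_CW (CW : ℕ) (hCW : 2 ≤ CW) (p : ℝ) (hp : p ∈ Set.Ioo (0:ℝ) 1) :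
    B 0 CW p < B 0 (CW+1) p := by
  obtain ⟨hp0, hp1⟩ := hp
  obtain ⟨m, rfl⟩ : ∃ m, CW = m + 1 := ⟨CW - 1, by omega⟩
  rw [B_zero_succ, B_zero_succ, sum_range_succ_cast_sub_mul_pow, sum_range_succ _ (m + 1)]
  exact div_lt_add_div_add (geom_sum_pos (by linarith) (Nat.add_one_ne_zero m)) (by positivity)
    (sum_range_cast_sub_mul_pow_mul_pow_lt_sq (by linarith) (by linarith) m)
end

section
/- For p \in (0,1] and d \geq 1, the tail probability scaled by 1/p satisfies x_{CW-1}(p)/p \leq (CW-1)/(2(1-p)) for p < 1, where x_{CW-1}(p) = \sum_{j=d+1}^{CW-1} \binom{CW-1}{j} p^j (1-p)^{CW-1-j}. -/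
/-!
Since `(k - i) / (i + 1) ≤ k / 2` for `i ≥ 1`, each term `C(k, i+1) p^(i+1) q^(k-i-1)` of the
binomial tail (with `q = 1 - p`) is at most `(k p / 2q)` times its predecessor `C(k, i) p^i q^(k-i)`.
Summing, the tail beyond `d + 1` is at most `k p / 2q` times the tail beyond `d`, which is a
probability and hence at most `1`.
-/

open Finset

theorem two_mul_choose_succ_le {k i : ℕ} (hi : 1 ≤ i) :
    2 * k.choose (i + 1) ≤ k * k.choose i :=
  calc 2 * k.choose (i + 1) ≤ (i + 1) * k.choose (i + 1) := by gcongr; omega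
    _ = k.choose i * (k - i) := by rw [mul_comm, Nat.choose_succ_right_eq]
    _ ≤ k * k.choose i := by rw [mul_comm]; gcongr; omega

theorem two_mul_one_sub_mul_binomial_term_succ_le {k i : ℕ} (hi : 1 ≤ i) {p : ℝ}
    (hp₀ : 0 ≤ p) (hp₁ : p ≤ 1) :
    2 * (1 - p) * (k.choose (i + 1) * p ^ (i + 1) * (1 - p) ^ (k - (i + 1))) ≤
      k * p * (k.choose i * p ^ i * (1 - p) ^ (k - i)) := by
  rcases lt_or_ge i k with hik | hki
  · have hchoose : (2 * k.choose (i + 1) : ℝ) ≤ k * k.choose i := by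
      exact_mod_cast two_mul_choose_succ_le hi
    have hq : (1 - p) ^ (k - i) = (1 - p) * (1 - p) ^ (k - (i + 1)) := by
      rw [← pow_succ']; congr 1; omega
    have hrest : 0 ≤ p ^ (i + 1) * (1 - p) ^ (k - i) := by
      have : 0 ≤ 1 - p := by linarith
      positivity
    rw [hq] at hrest ⊢
    calc 2 * (1 - p) * (k.choose (i + 1) * p ^ (i + 1) * (1 - p) ^ (k - (i + 1)))
        = (2 * k.choose (i + 1) : ℝ) * (p ^ (i + 1) * ((1 - p) * (1 - p) ^ (k - (i + 1)))) := by
          ring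
      _ ≤ (k * k.choose i : ℝ) * (p ^ (i + 1) * ((1 - p) * (1 - p) ^ (k - (i + 1)))) := by
          gcongr
      _ = _ := by ring
  · rw [Nat.choose_eq_zero_of_lt (by omega)]
    have : 0 ≤ 1 - p := by linarith
    simp only [Nat.cast_zero, zero_mul, mul_zero]
    positivity

theorem x_le_one (d k : ℕ) {p : ℝ} (hp₀ : 0 ≤ p) (hp₁ : p ≤ 1) : x d k p ≤ 1 := by
  have : 0 ≤ 1 - p := by linarith
  calc x d k p ≤ ∑ j ∈ range (k + 1), (k.choose j : ℝ) * p ^ j * (1 - p) ^ (k - j) := by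
        refine sum_le_sum_of_subset_of_nonneg ?_ fun j _ _ ↦ by positivity
        intro j hj
        simp only [mem_Icc, mem_range] at hj ⊢
        omega
    _ = (p + (1 - p)) ^ k := by
        rw [add_pow]; exact sum_congr rfl fun j _ ↦ by ring
    _ = 1 := by rw [add_sub_cancel, one_pow]

theorem two_mul_one_sub_mul_x_succ_le (d k : ℕ) {p : ℝ} (hp₀ : 0 ≤ p) (hp₁ : p ≤ 1) :
    2 * (1 - p) * x (d + 1) k p ≤ k * p * x d k p := by
  have : 0 ≤ 1 - p := by linarith
  set f : ℕ → ℝ := fun j ↦ k.choose j * p ^ j * (1 - p) ^ (k - j)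
  have hshift : x (d + 1) k p ≤ ∑ i ∈ Icc (d + 1) k, f (i + 1) := by
    rw [show ∑ i ∈ Icc (d + 1) k, f (i + 1) = ∑ j ∈ Icc (d + 1 + 1) (k + 1), f j by
      rw [← map_add_right_Icc, sum_map]; rfl]
    refine sum_le_sum_of_subset_of_nonneg (Icc_subset_Icc le_rfl (by omega)) ?_
    intro j _ _
    positivity
  calc 2 * (1 - p) * x (d + 1) k p ≤ 2 * (1 - p) * ∑ i ∈ Icc (d + 1) k, f (i + 1) := by
        gcongr
    _ ≤ k * p * x d k p := by
        rw [x, mul_sum, mul_sum]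
        exact sum_le_sum fun i hi ↦
          two_mul_one_sub_mul_binomial_term_succ_le (by simp only [mem_Icc] at hi; omega) hp₀ hp₁

theorem tail_over_p_bound (d CW : ℕ) (hd : 1 ≤ d) (hCW : d + 2 ≤ CW)
    (p : ℝ) (hp : p ∈ Set.Ioo (0:ℝ) 1) :
    x d (CW-1) p / p ≤ ((CW:ℝ) - 1) / (2 * (1 - p)) := by
  obtain ⟨hp₀, hp₁⟩ := hp
  obtain ⟨e, rfl⟩ : ∃ e, d = e + 1 := ⟨d - 1, by omega⟩
  have hk : ((CW - 1 : ℕ) : ℝ) = CW - 1 := by rw [Nat.cast_sub (by omega), Nat.cast_one]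
  rw [div_le_div_iff₀ hp₀ (by linarith), ← hk]
  calc x (e + 1) (CW - 1) p * (2 * (1 - p)) ≤ (CW - 1 : ℕ) * p * x e (CW - 1) p := by
        linarith [two_mul_one_sub_mul_x_succ_le e (CW - 1) hp₀.le hp₁.le]
    _ ≤ (CW - 1 : ℕ) * p * 1 := by gcongr; exact x_le_one e _ hp₀.le hp₁.le
    _ = (CW - 1 : ℕ) * p := mul_one _
end

section
/- If d = 0, then J(p) := [\sum_{k=0}^{CW-1}((k+1)(1-x_k) + \sum_{j=0}^{k} j (x_j - x_{j-1}))] / [CW - \sum_{k=0}^{CW-1}(1-x_k)(1-p)] equals 1/p for p \in (0,1], where x_k = 1 - (1-p)^k. -/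
/-!
Write `q = 1 - p`, so that `1 - x_k = q ^ k` and `x_j - x_{j-1} = p q ^ (j - 1)`.
Multiplied by `p`, the `k`-th summand of the numerator telescopes to `1 - q ^ (k + 1)`, and the
denominator `CW - ∑ q ^ k q` is the same sum `∑_{k < CW} (1 - q ^ (k + 1))`, which is positive for
`0 ≤ q < 1`. Hence the quotient is `1 / p`.
-/

open Finset

theorem mul_stage_term_eq {R : Type*} [CommRing R] (p : R) (k : ℕ) :
    p * (((k : R) + 1) * (1 - (1 - (1 - p) ^ k)) +
        ∑ j ∈ Icc 1 k, (j : R) * ((1 - (1 - p) ^ j) - (1 - (1 - p) ^ (j - 1)))) =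
      1 - (1 - p) ^ (k + 1) := by
  induction k with
  | zero => simp
  | succ n ih =>
    rw [sum_Icc_succ_top (Nat.le_add_left 1 n), Nat.add_sub_cancel]
    push_cast at ih ⊢
    linear_combination ih

theorem natCast_sub_sum_eq {R : Type*} [CommRing R] (p : R) (n : ℕ) :
    (n : R) - ∑ k ∈ range n, (1 - (1 - (1 - p) ^ k)) * (1 - p) =
      ∑ k ∈ range n, (1 - (1 - p) ^ (k + 1)) := by
  simp [sum_sub_distrib, pow_succ]

theorem sum_one_sub_pow_succ_pos {R : Type*} [CommRing R] [LinearOrder R] [IsStrictOrderedRing R]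
    {q : R} (hq₀ : 0 ≤ q) (hq₁ : q < 1) {n : ℕ} (hn : 1 ≤ n) :
    0 < ∑ k ∈ range n, (1 - q ^ (k + 1)) :=
  sum_pos (fun k _ => sub_pos.mpr (pow_lt_one₀ hq₀ hq₁ k.succ_ne_zero))
    (nonempty_range_iff.mpr (Nat.one_le_iff_ne_zero.mp hn))

/-- For `d = 0` the mean number of slots between backoff-stage changes equals `1/p`. -/
theorem J_eq_inv_p (CW : ℕ) (hCW : 1 ≤ CW) (p : ℝ) (hp : p ∈ Set.Ioc (0:ℝ) 1) :
    (∑ k ∈ Finset.range CW,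
        (((k:ℝ)+1) * (1 - (1 - (1-p)^k)) +
          ∑ j ∈ Finset.Icc 1 k, (j:ℝ) * ((1 - (1-p)^j) - (1 - (1-p)^(j-1))))) /
      ((CW:ℝ) - ∑ k ∈ Finset.range CW, (1 - (1 - (1-p)^k)) * (1-p)) = 1 / p := by
  obtain ⟨hp₀, hp₁⟩ := hp
  have hden : 0 < ∑ k ∈ range CW, (1 - (1 - p) ^ (k + 1)) :=
    sum_one_sub_pow_succ_pos (by linarith) (by linarith) hCW
  rw [natCast_sub_sum_eq, div_eq_div_iff hden.ne' hp₀.ne', one_mul, mul_comm, mul_sum]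
  exact sum_congr rfl fun k _ => mul_stage_term_eq p k
end
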